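/- arXiv:0906.4737 — 3 statements merged into one kernel-verified Lean document; each statement's English description precedes it below -/
import Mathlib

section
/- Let g : ℝ → ℝ be continuous and convex, let O ⊂ ℝ^M be bounded, open and measurable, and let (vₙ) be a sequence in L¹(O) with vₙ ⇀ v weakly in L¹(O) and g(vₙ) ⇀ w weakly in L¹(O). Then g(v) ≤ w almost everywhere on O. -/
/-!
A convex `g : ℝ → ℝ` is the supremum of its tangent lines `t ↦ g q + g'₊(q) (t - q)` at rational
points `q`; this uses continuity of `g` and the monotonicity of its right derivative `g'₊`. For each
affine minorant `A t + B ≤ g t`, testing the weak convergences against indicator functions gives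
`∫ₛ (A v + B) = lim ∫ₛ (A vₙ + B) ≤ lim ∫ₛ g(vₙ) = ∫ₛ w` for every measurable `s`, hence
`A v + B ≤ w` a.e. Taking the countably many rational tangent lines at once yields `g(v) ≤ w` a.e.
-/

open MeasureTheory Filter Topology Set

lemma ConvexOn.add_rightDeriv_mul_sub_le {g : ℝ → ℝ} (hg : ConvexOn ℝ univ g) (p t : ℝ) :
    g p + derivWithin g (Ioi p) p * (t - p) ≤ g t := by
  have hp : p ∈ interior univ := by simp
  rcases lt_trichotomy t p with htp | rfl | hpt
  · have hslope : slope g t p ≤ derivWithin g (Ioi p) p :=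
      (hg.slope_le_leftDeriv_of_mem_interior (mem_univ t) hp htp).trans
        (hg.leftDeriv_le_rightDeriv_of_mem_interior hp)
    rw [slope_def_field, div_le_iff₀ (sub_pos.mpr htp)] at hslope
    linarith
  · simp
  · have hslope : derivWithin g (Ioi p) p ≤ slope g p t :=
      hg.rightDeriv_le_slope_of_mem_interior hp (mem_univ t) hpt
    rw [slope_def_field, le_div_iff₀ (sub_pos.mpr hpt)] at hslope
    linarith

lemma ConvexOn.le_of_forall_rat_tangent_le {g : ℝ → ℝ} (hg : ConvexOn ℝ univ g) {t c : ℝ}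
    (h : ∀ q : ℚ, g q + derivWithin g (Ioi (q : ℝ)) q * (t - q) ≤ c) : g t ≤ c := by
  set a := derivWithin g (Ioi (t + 1)) (t + 1)
  have hcont : Continuous g := continuousOn_univ.mp (hg.continuousOn isOpen_univ)
  by_contra! hct
  have htangent : Continuous fun s => g s + a * (t - s) := by fun_prop
  have hnear : ∀ᶠ s in 𝓝 t, c < g s + a * (t - s) ∧ s < t + 1 :=
    ((htangent.tendsto t).eventually (lt_mem_nhds (by simpa using hct))).and
      (gt_mem_nhds (lt_add_one t))
  obtain ⟨l, u, ⟨hlt, htu⟩, hsub⟩ := mem_nhds_iff_exists_Ioo_subset.mp hnear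
  obtain ⟨q, htq, hqu⟩ := exists_rat_btwn htu
  obtain ⟨hcq, hq1⟩ := hsub ⟨hlt.trans htq, hqu⟩
  -- the right derivative is monotone, and on `(t, t + 1]` the factor `t - q` is negative
  have hslope : derivWithin g (Ioi (q : ℝ)) q ≤ a :=
    hg.monotoneOn_rightDeriv (by simp) (by simp) hq1.le
  nlinarith [h q, hcq]

section WeakConvergence

variable {α ι : Type*} [MeasurableSpace α]

def TendstoWeaklyL1 (μ : Measure α) (l : Filter ι) (u : ι → α → ℝ) (f : α → ℝ) : Prop :=
  ∀ φ : α → ℝ, Measurable φ → (∃ C, ∀ x, |φ x| ≤ C) →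
    Tendsto (fun i => ∫ x, u i x * φ x ∂μ) l (𝓝 (∫ x, f x * φ x ∂μ))

variable {μ : Measure α} {l : Filter ι}

lemma TendstoWeaklyL1.tendsto_setIntegral {u : ι → α → ℝ}
    {f : α → ℝ} (h : TendstoWeaklyL1 μ l u f) {s : Set α} (hs : MeasurableSet s) :
    Tendsto (fun i => ∫ x in s, u i x ∂μ) l (𝓝 (∫ x in s, f x ∂μ)) := by
  have hind : ∀ F : α → ℝ, ∫ x, F x * s.indicator 1 x ∂μ = ∫ x in s, F x ∂μ := fun F => by
    simp_rw [← Set.indicator_mul_right, Pi.one_apply, mul_one, integral_indicator hs]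
  have hφ : ∃ C, ∀ x, |s.indicator (1 : α → ℝ) x| ≤ C :=
    ⟨1, fun x => by by_cases hx : x ∈ s <;> simp [hx]⟩
  simpa only [hind] using h _ (measurable_one.indicator hs) hφ

lemma setIntegral_const_mul_add [IsFiniteMeasure μ] {f : α → ℝ}
    (hf : Integrable f μ) (s : Set α) (A B : ℝ) :
    ∫ x in s, (A * f x + B) ∂μ = A * ∫ x in s, f x ∂μ + μ.real s * B := by
  rw [integral_add (hf.restrict.const_mul A) (integrable_const B), integral_const_mul,
    setIntegral_const, smul_eq_mul]

lemma ae_le_of_tendsto_setIntegral [l.NeBot]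
    {u v : ι → α → ℝ} {f g : α → ℝ} (hu : ∀ i, Integrable (u i) μ)
    (hv : ∀ i, Integrable (v i) μ) (hf : Integrable f μ) (hg : Integrable g μ)
    (huv : ∀ i, u i ≤ᵐ[μ] v i)
    (hu_lim : ∀ s, MeasurableSet s →
      Tendsto (fun i => ∫ x in s, u i x ∂μ) l (𝓝 (∫ x in s, f x ∂μ)))
    (hv_lim : ∀ s, MeasurableSet s →
      Tendsto (fun i => ∫ x in s, v i x ∂μ) l (𝓝 (∫ x in s, g x ∂μ))) :
    f ≤ᵐ[μ] g :=
  ae_le_of_forall_setIntegral_le hf hg fun s hs _ =>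
    le_of_tendsto_of_tendsto' (hu_lim s hs) (hv_lim s hs) fun i =>
      setIntegral_mono_ae (hu i).integrableOn (hv i).integrableOn (huv i)

lemma TendstoWeaklyL1.ae_affine_le_of_affine_le [IsFiniteMeasure μ] [l.NeBot]
    {u : ι → α → ℝ} {f w : α → ℝ} {G : ℝ → ℝ}
    (hu : ∀ i, Integrable (u i) μ) (hf : Integrable f μ)
    (hGu : ∀ i, Integrable (fun x => G (u i x)) μ) (hw : Integrable w μ)
    (hu_lim : TendstoWeaklyL1 μ l u f) (hGu_lim : TendstoWeaklyL1 μ l (fun i x => G (u i x)) w)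
    {A B : ℝ} (hAB : ∀ t, A * t + B ≤ G t) :
    ∀ᵐ x ∂μ, A * f x + B ≤ w x := by
  refine ae_le_of_tendsto_setIntegral (u := fun i x => A * u i x + B)
    (fun i => ((hu i).const_mul A).add (integrable_const B)) hGu
    ((hf.const_mul A).add (integrable_const B)) hw
    (fun i => ae_of_all _ fun x => hAB (u i x)) (fun s hs => ?_)
    fun _ hs => hGu_lim.tendsto_setIntegral hs
  simp only [setIntegral_const_mul_add (hu _), setIntegral_const_mul_add hf]
  exact ((hu_lim.tendsto_setIntegral hs).const_mul A).add_const _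

end WeakConvergence

theorem stmt_3_general (M : ℕ) (O : Set (Fin M → ℝ))
    (hO_bdd : Bornology.IsBounded O)
    (g : ℝ → ℝ) (hg_conv : ConvexOn ℝ Set.univ g)
    (v : ℕ → (Fin M → ℝ) → ℝ) (vlim w : (Fin M → ℝ) → ℝ)
    (hv_int : ∀ n, IntegrableOn (v n) O)
    (hvlim_int : IntegrableOn vlim O)
    (hgv_int : ∀ n, IntegrableOn (fun x => g (v n x)) O)
    (hw_int : IntegrableOn w O)
    (hv_weak : ∀ φ : (Fin M → ℝ) → ℝ, Measurable φ → (∃ Cφ, ∀ x, |φ x| ≤ Cφ) →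
      Tendsto (fun n => ∫ x in O, v n x * φ x) atTop (𝓝 (∫ x in O, vlim x * φ x)))
    (hgv_weak : ∀ φ : (Fin M → ℝ) → ℝ, Measurable φ → (∃ Cφ, ∀ x, |φ x| ≤ Cφ) →
      Tendsto (fun n => ∫ x in O, g (v n x) * φ x) atTop (𝓝 (∫ x in O, w x * φ x))) :
    ∀ᵐ x ∂(volume.restrict O), g (vlim x) ≤ w x := by
  have : IsFiniteMeasure (volume.restrict O) :=
    ⟨by simpa using hO_bdd.measure_lt_top⟩
  have htangent : ∀ q : ℚ, ∀ᵐ x ∂(volume.restrict O),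
      g q + derivWithin g (Ioi (q : ℝ)) q * (vlim x - q) ≤ w x := fun q => by
    have hline := TendstoWeaklyL1.ae_affine_le_of_affine_le hv_int hvlim_int hgv_int hw_int
      hv_weak hgv_weak (A := derivWithin g (Ioi (q : ℝ)) q)
      (B := g q - derivWithin g (Ioi (q : ℝ)) q * q)
      fun t => by linarith [hg_conv.add_rightDeriv_mul_sub_le q t]
    filter_upwards [hline] with x hx
    linarith
  filter_upwards [ae_all_iff.mpr htangent] with x hx
  exact hg_conv.le_of_forall_rat_tangent_le hx

theorem stmt_3 (M : ℕ) (O : Set (Fin M → ℝ))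
    (hO_bdd : Bornology.IsBounded O) (hO_open : IsOpen O)
    (g : ℝ → ℝ) (hg_cont : Continuous g) (hg_conv : ConvexOn ℝ Set.univ g)
    (v : ℕ → (Fin M → ℝ) → ℝ) (vlim w : (Fin M → ℝ) → ℝ)
    (hv_int : ∀ n, IntegrableOn (v n) O)
    (hvlim_int : IntegrableOn vlim O)
    (hgv_int : ∀ n, IntegrableOn (fun x => g (v n x)) O)
    (hw_int : IntegrableOn w O)
    (hv_weak : ∀ φ : (Fin M → ℝ) → ℝ, Measurable φ → (∃ Cφ, ∀ x, |φ x| ≤ Cφ) →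
      Tendsto (fun n => ∫ x in O, v n x * φ x) atTop (𝓝 (∫ x in O, vlim x * φ x)))
    (hgv_weak : ∀ φ : (Fin M → ℝ) → ℝ, Measurable φ → (∃ Cφ, ∀ x, |φ x| ≤ Cφ) →
      Tendsto (fun n => ∫ x in O, g (v n x) * φ x) atTop (𝓝 (∫ x in O, w x * φ x))) :
    ∀ᵐ x ∂(volume.restrict O), g (vlim x) ≤ w x :=
  stmt_3_general M O hO_bdd g hg_conv v vlim w hv_int hvlim_int hgv_int hw_int hv_weak hgv_weak
end

section
/- Let O be a bounded measurable subset of ℝ^M, and let (fₙ), (gₙ) be sequences of measurable functions on O such that fₙ is uniformly bounded in L^∞(O), fₙ → f almost everywhere on O, and gₙ ⇀ g weakly in L¹(O). Then fₙ gₙ ⇀ f g weakly in L¹(O). -/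
/-!
A weakly convergent sequence `gₙ` in `L¹(μ)`, `μ` finite, is uniformly integrable and bounded in
`L¹`. To see this, apply Baire's theorem to the `L^∞` unit ball with the `L¹` metric, a complete
space on which each `u ↦ ∫ gₙ u` is continuous: for every `ε` there are `m` and an `L¹`-ball
around some `w₀` on which `|∫ (gₙ - gₘ) w| ≤ ε` for all `n ≥ m`. Changing `w₀` on a set `E` of
small measure stays in the ball, which bounds `∫_E |gₙ - gₘ|`; moving `w₀` a fixed step towards
the sign of `gₙ - gₘ` also stays in the ball, which bounds `∫ |gₙ - gₘ|`.

Then write `fₙ gₙ φ = gₙ (fₙ - f) φ + gₙ f φ`. The second term converges by weak convergence. In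
the first, `hₙ = (fₙ - f) φ` is bounded and tends to `0` in measure: on the small set where
`|hₙ| ≥ η`, uniform integrability controls `∫ |gₙ hₙ|`, and off it `|gₙ hₙ| ≤ η |gₙ|`.
-/

open MeasureTheory Filter Topology

open scoped ENNReal NNReal

theorem exists_isOpen_forall_ge_dist_le {X E : Type*} [TopologicalSpace X] [BaireSpace X]
    [Nonempty X] [PseudoMetricSpace E] {Φ : ℕ → X → E} (hΦ : ∀ n, Continuous (Φ n))
    (hcauchy : ∀ x, CauchySeq (Φ · x)) {ε : ℝ} (hε : 0 < ε) :
    ∃ m, ∃ U : Set X, IsOpen U ∧ U.Nonempty ∧ ∀ x ∈ U, ∀ n ≥ m, dist (Φ n x) (Φ m x) ≤ ε := by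
  set F : ℕ → Set X := fun m => ⋂ n ≥ m, {x | dist (Φ n x) (Φ m x) ≤ ε}
  have hF : ∀ m, IsClosed (F m) := fun m =>
    isClosed_biInter fun n _ => isClosed_le ((hΦ n).dist (hΦ m)) continuous_const
  have hcover : ⋃ m, F m = Set.univ := Set.eq_univ_of_forall fun x => by
    obtain ⟨m, hm⟩ := Metric.cauchySeq_iff'.1 (hcauchy x) ε hε
    exact Set.mem_iUnion.2 ⟨m, Set.mem_iInter₂.2 fun n hn => (hm n hn).le⟩
  obtain ⟨m, hm⟩ := nonempty_interior_of_iUnion_of_closed hF hcover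
  exact ⟨m, interior (F m), isOpen_interior, hm, fun x hx n hn =>
    Set.mem_iInter₂.1 (interior_subset (s := F m) hx) n hn⟩

section

variable {α : Type*} [MeasurableSpace α] {μ : Measure α}

lemma eLpNorm_one_eq_ofReal_integral_abs {h : α → ℝ} (hh : Integrable h μ) :
    eLpNorm h 1 μ = ENNReal.ofReal (∫ x, |h x| ∂μ) := by
  rw [eLpNorm_one_eq_lintegral_enorm, ← ofReal_integral_norm_eq_lintegral_enorm hh]
  rfl

lemma exists_measurable_abs_le_ae_eq {v : α → ℝ} {c : ℝ} (hv : AEMeasurable v μ) (hc : 0 ≤ c)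
    (hvc : ∀ᵐ x ∂μ, |v x| ≤ c) : ∃ w, Measurable w ∧ (∀ x, |w x| ≤ c) ∧ v =ᵐ[μ] w := by
  set s := {x | |hv.mk v x| ≤ c}
  refine ⟨s.indicator (hv.mk v),
    hv.measurable_mk.indicator (measurableSet_le hv.measurable_mk.abs measurable_const),
    fun x => ?_, ?_⟩
  · by_cases hx : x ∈ s
    · rw [Set.indicator_of_mem hx]
      exact hx
    · simpa [Set.indicator_of_notMem hx] using hc
  · filter_upwards [hv.ae_eq_mk, hvc] with x hx hxc
    rw [Set.indicator_of_mem (show x ∈ s by simpa [s, ← hx] using hxc), hx]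

lemma exists_measurable_abs_le_one_mul_ae_eq_abs {h : α → ℝ} (hh : AEMeasurable h μ) :
    ∃ s : α → ℝ, Measurable s ∧ (∀ x, |s x| ≤ 1) ∧ ∀ᵐ x ∂μ, h x * s x = |h x| := by
  refine ⟨fun x => if 0 ≤ hh.mk h x then 1 else -1,
    Measurable.ite (measurableSet_le measurable_const hh.measurable_mk) measurable_const
      measurable_const, fun x => by dsimp only; split_ifs <;> simp, ?_⟩
  filter_upwards [hh.ae_eq_mk] with x hx
  rw [← hx]
  split_ifs with h0
  · rw [mul_one, abs_of_nonneg h0]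
  · rw [mul_neg_one, abs_of_neg (not_le.1 h0)]

section

variable {β : Type*} [NormedAddCommGroup β] {p : ℝ≥0∞}

lemma unifIntegrable_of_forall_exists_eLpNorm_indicator_sub_le {g : ℕ → α → β} (hp : 1 ≤ p)
    (hp' : p ≠ ∞) (hg : ∀ n, MemLp (g n) p μ)
    (h : ∀ ε > 0, ∃ m, ∃ δ > 0, ∀ n ≥ m, ∀ E, MeasurableSet E → μ E ≤ ENNReal.ofReal δ →
      eLpNorm (E.indicator (g n - g m)) p μ ≤ ENNReal.ofReal ε) :
    UnifIntegrable g p μ := by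
  intro ε hε
  obtain ⟨m, δ₁, hδ₁, hm⟩ := h (ε / 2) (half_pos hε)
  obtain ⟨δ₂, hδ₂, hfin⟩ :=
    unifIntegrable_finite (ι := Fin (m + 1)) hp hp' (fun j => hg j) (half_pos hε)
  refine ⟨min δ₁ δ₂, lt_min hδ₁ hδ₂, fun n E hE hEδ => ?_⟩
  have hE₁ : μ E ≤ ENNReal.ofReal δ₁ := hEδ.trans (ENNReal.ofReal_le_ofReal (min_le_left _ _))
  have hE₂ : μ E ≤ ENNReal.ofReal δ₂ := hEδ.trans (ENNReal.ofReal_le_ofReal (min_le_right _ _))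
  rcases le_or_gt m n with hmn | hnm
  · calc eLpNorm (E.indicator (g n)) p μ
          = eLpNorm (E.indicator (g n - g m) + E.indicator (g m)) p μ := by
            rw [← Set.indicator_add', sub_add_cancel]
      _ ≤ eLpNorm (E.indicator (g n - g m)) p μ + eLpNorm (E.indicator (g m)) p μ :=
          eLpNorm_add_le (((hg n).sub (hg m)).1.indicator hE) ((hg m).1.indicator hE) hp
      _ ≤ ENNReal.ofReal (ε / 2) + ENNReal.ofReal (ε / 2) :=
          add_le_add (hm n hmn E hE hE₁) (hfin (Fin.last m) E hE hE₂)
      _ = ENNReal.ofReal ε := by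
          rw [← ENNReal.ofReal_add (by positivity) (by positivity), add_halves]
  · exact (hfin ⟨n, by omega⟩ E hE hE₂).trans (ENNReal.ofReal_le_ofReal (by linarith))

lemma exists_eLpNorm_le_of_forall_ge_eLpNorm_sub_le {g : ℕ → α → β} (hp : 1 ≤ p)
    (hg : ∀ n, MemLp (g n) p μ)
    {m : ℕ} {C : ℝ≥0} (h : ∀ n ≥ m, eLpNorm (g n - g m) p μ ≤ C) :
    ∃ C' : ℝ≥0, ∀ n, eLpNorm (g n) p μ ≤ C' := by
  set C₀ := (Finset.range (m + 1)).sup fun j => (eLpNorm (g j) p μ).toNNReal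
  have hC₀ {j : ℕ} (hj : j ≤ m) : eLpNorm (g j) p μ ≤ C₀ := by
    rw [← ENNReal.coe_toNNReal (hg j).eLpNorm_ne_top, ENNReal.coe_le_coe]
    exact Finset.le_sup (f := fun j => (eLpNorm (g j) p μ).toNNReal)
      (Finset.mem_range_succ_iff.2 hj)
  refine ⟨C + C₀, fun n => ?_⟩
  rcases le_or_gt m n with hmn | hnm
  · calc eLpNorm (g n) p μ = eLpNorm (g n - g m + g m) p μ := by rw [sub_add_cancel]
      _ ≤ eLpNorm (g n - g m) p μ + eLpNorm (g m) p μ :=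
          eLpNorm_add_le ((hg n).sub (hg m)).1 (hg m).1 hp
      _ ≤ C + C₀ := add_le_add (h n hmn) (hC₀ le_rfl)
  · exact (hC₀ hnm.le).trans (by simp)

end

lemma abs_integral_mul_le {g h : α → ℝ} {K η : ℝ} {T : Set α} (hg : Integrable g μ)
    (hT : MeasurableSet T) (hη : 0 ≤ η) (hK : ∀ᵐ x ∂μ, |h x| ≤ K) (hTη : ∀ x ∉ T, |h x| < η) :
    |∫ x, g x * h x ∂μ| ≤ K * ∫ x in T, |g x| ∂μ + η * ∫ x, |g x| ∂μ := by
  have hbound : ∀ᵐ x ∂μ, |g x * h x| ≤ T.indicator (fun x => K * |g x|) x + η * |g x| := by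
    filter_upwards [hK] with x hx
    rw [abs_mul]
    by_cases hxT : x ∈ T
    · rw [Set.indicator_of_mem hxT, mul_comm K]
      nlinarith [abs_nonneg (g x)]
    · rw [Set.indicator_of_notMem hxT, zero_add, mul_comm η]
      exact mul_le_mul_of_nonneg_left (hTη x hxT).le (abs_nonneg _)
  have hint : Integrable (fun x => T.indicator (fun x => K * |g x|) x + η * |g x|) μ :=
    (hg.abs.const_mul K).indicator hT |>.add (hg.abs.const_mul η)
  calc |∫ x, g x * h x ∂μ| ≤ ∫ x, |g x * h x| ∂μ := abs_integral_le_integral_abs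
    _ ≤ ∫ x, (T.indicator (fun x => K * |g x|) x + η * |g x|) ∂μ :=
        integral_mono_of_nonneg (ae_of_all _ fun x => abs_nonneg _) hint hbound
    _ = K * ∫ x in T, |g x| ∂μ + η * ∫ x, |g x| ∂μ := by
        rw [integral_add ((hg.abs.const_mul K).indicator hT) (hg.abs.const_mul η),
          integral_indicator hT, integral_const_mul, integral_const_mul]

def linftyUnitBall (μ : Measure α) : Set (Lp ℝ 1 μ) := {u | ∀ᵐ x ∂μ, |u x| ≤ 1}

lemma isClosed_linftyUnitBall : IsClosed (linftyUnitBall μ) := by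
  refine IsSeqClosed.isClosed fun u u₀ hu hlim => ?_
  obtain ⟨ns, -, hns⟩ := (tendstoInMeasure_of_tendsto_Lp hlim).exists_seq_tendsto_ae
  filter_upwards [ae_all_iff.2 hu, hns] with x hx hxlim
  exact le_of_tendsto' hxlim.abs fun k => hx (ns k)

lemma continuous_integral_mul_linftyUnitBall {g : α → ℝ} (hg : Integrable g μ) :
    Continuous fun u : linftyUnitBall μ => ∫ x, g x * (u : Lp ℝ 1 μ) x ∂μ := by
  refine continuous_iff_seqContinuous.2 fun u u₀ hlim =>
    tendsto_of_subseq_tendsto fun ns hns => ?_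
  obtain ⟨ms, -, hms⟩ := (tendstoInMeasure_of_tendsto_Lp
    ((continuous_subtype_val.tendsto u₀).comp (hlim.comp hns))).exists_seq_tendsto_ae
  refine ⟨ms, tendsto_integral_of_dominated_convergence (fun x => |g x|)
    (fun k => hg.aestronglyMeasurable.mul (Lp.aestronglyMeasurable _)) hg.abs (fun k => ?_) ?_⟩
  · filter_upwards [(u (ns (ms k))).2] with x hx
    rw [Real.norm_eq_abs, abs_mul]
    exact mul_le_of_le_one_right (abs_nonneg _) hx
  · filter_upwards [hms] with x hx
    exact hx.const_mul (g x)

variable [IsFiniteMeasure μ]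

lemma exists_mem_linftyUnitBall_coeFn_ae_eq {w : α → ℝ} (hw : Measurable w)
    (hwb : ∀ x, |w x| ≤ 1) : ∃ u ∈ linftyUnitBall μ, ⇑u =ᵐ[μ] w := by
  have hwi : Integrable w μ := Integrable.of_bound hw.aestronglyMeasurable 1 (ae_of_all _ hwb)
  refine ⟨hwi.toL1 w, ?_, hwi.coeFn_toL1⟩
  filter_upwards [hwi.coeFn_toL1] with x hx
  rw [hx]
  exact hwb x

lemma exists_forall_abs_integral_sub_mul_le {g : ℕ → α → ℝ} (hg : ∀ n, Integrable (g n) μ)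
    (hcauchy : ∀ v : α → ℝ, Measurable v → (∀ x, |v x| ≤ 1) →
      CauchySeq fun n => ∫ x, g n x * v x ∂μ)
    {ε : ℝ} (hε : 0 < ε) :
    ∃ m, ∃ w₀ : α → ℝ, Measurable w₀ ∧ (∀ x, |w₀ x| ≤ 1) ∧ ∃ r > 0, ∀ n ≥ m,
      ∀ w : α → ℝ, Measurable w → (∀ x, |w x| ≤ 1) → ∫ x, |w x - w₀ x| ∂μ ≤ r →
        |∫ x, (g n - g m) x * w x ∂μ| ≤ ε := by
  have : CompleteSpace (linftyUnitBall μ) := isClosed_linftyUnitBall.completeSpace_coe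
  have : BaireSpace (linftyUnitBall μ) := BaireSpace.of_completelyPseudoMetrizable
  have : Nonempty (linftyUnitBall μ) := ⟨⟨0, by
    filter_upwards [Lp.coeFn_zero ℝ 1 μ] with x hx
    rw [hx]
    simp⟩⟩
  have hrep (u : linftyUnitBall μ) :
      ∃ w, Measurable w ∧ (∀ x, |w x| ≤ 1) ∧ ⇑(u : Lp ℝ 1 μ) =ᵐ[μ] w :=
    exists_measurable_abs_le_ae_eq (Lp.aestronglyMeasurable _).aemeasurable zero_le_one u.2
  have hcongr (n : ℕ) {u w : α → ℝ} (huw : u =ᵐ[μ] w) :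
      ∫ x, g n x * u x ∂μ = ∫ x, g n x * w x ∂μ :=
    integral_congr_ae (huw.mono fun x hx => by simp only [hx])
  obtain ⟨m, U, hU, ⟨u₀, hu₀⟩, hUm⟩ := exists_isOpen_forall_ge_dist_le
    (Φ := fun n (u : linftyUnitBall μ) => ∫ x, g n x * (u : Lp ℝ 1 μ) x ∂μ)
    (fun n => continuous_integral_mul_linftyUnitBall (hg n))
    (fun u => by
      obtain ⟨w, hw, hwb, huw⟩ := hrep u
      simpa only [hcongr _ huw] using hcauchy w hw hwb) hε
  obtain ⟨r, hr, hball⟩ := Metric.isOpen_iff.1 hU u₀ hu₀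
  obtain ⟨w₀, hw₀, hw₀b, hu₀w₀⟩ := hrep u₀
  refine ⟨m, w₀, hw₀, hw₀b, r / 2, half_pos hr, fun n hn w hw hwb hwr => ?_⟩
  obtain ⟨u, hu, huw⟩ := exists_mem_linftyUnitBall_coeFn_ae_eq (μ := μ) hw hwb
  have hdist : dist (⟨u, hu⟩ : linftyUnitBall μ) u₀ < r := by
    rw [Subtype.dist_eq, L1.dist_eq_integral_dist]
    calc ∫ x, dist (u x) ((u₀ : Lp ℝ 1 μ) x) ∂μ = ∫ x, |w x - w₀ x| ∂μ :=
          integral_congr_ae (by filter_upwards [huw, hu₀w₀] with x h h₀; rw [h, h₀]; rfl)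
      _ < r := by linarith
  have hprod (j : ℕ) : Integrable (fun x => g j x * w x) μ :=
    (hg j).mul_bdd hw.aestronglyMeasurable (ae_of_all _ hwb)
  have hmn := hUm _ (hball hdist) n hn
  simp only [Real.dist_eq, hcongr _ huw] at hmn
  simpa only [Pi.sub_apply, sub_mul, integral_sub (hprod n) (hprod m)] using hmn

lemma eLpNorm_indicator_le_of_forall_abs_integral_mul_le {h w₀ : α → ℝ} {r ε : ℝ}
    (hh : Integrable h μ) (hw₀ : Measurable w₀) (hw₀b : ∀ x, |w₀ x| ≤ 1)
    (hball : ∀ w : α → ℝ, Measurable w → (∀ x, |w x| ≤ 1) → ∫ x, |w x - w₀ x| ∂μ ≤ r →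
      |∫ x, h x * w x ∂μ| ≤ ε)
    {E : Set α} (hE : MeasurableSet E) (hEr : 2 * μ.real E ≤ r) :
    eLpNorm (E.indicator h) 1 μ ≤ ENNReal.ofReal (2 * ε) := by
  classical
  obtain ⟨s, hs, hsb, hhs⟩ := exists_measurable_abs_le_one_mul_ae_eq_abs hh.aemeasurable
  have hpiece (v : α → ℝ) (hv : Measurable v) (hvb : ∀ x, |v x| ≤ 1) :
      |∫ x, h x * E.piecewise v w₀ x ∂μ| ≤ ε := by
    refine hball _ (hv.piecewise hE hw₀) (fun x => ?_) ?_
    · by_cases hx : x ∈ E <;> simp [hx, hvb x, hw₀b x]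
    · calc ∫ x, |E.piecewise v w₀ x - w₀ x| ∂μ ≤ ∫ x, E.indicator (fun _ => (2 : ℝ)) x ∂μ := by
            refine integral_mono_of_nonneg (ae_of_all _ fun x => abs_nonneg _)
              ((integrable_const 2).indicator hE) (ae_of_all _ fun x => ?_)
            by_cases hx : x ∈ E
            · simp only [Set.piecewise_eq_of_mem _ _ _ hx, Set.indicator_of_mem hx]
              exact (abs_sub _ _).trans (by linarith [hvb x, hw₀b x])
            · simp [hx]
        _ = 2 * μ.real E := by rw [integral_indicator_const _ hE, smul_eq_mul, mul_comm]
        _ ≤ r := hEr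
  have hprod {v : α → ℝ} (hv : Measurable v) (hvb : ∀ x, |v x| ≤ 1) :
      Integrable (fun x => h x * E.piecewise v w₀ x) μ :=
    hh.mul_bdd (c := 1) (hv.piecewise hE hw₀).aestronglyMeasurable
      (ae_of_all _ fun x => by by_cases hx : x ∈ E <;> simp [hx, hvb x, hw₀b x])
  have hdiff : ∫ x, h x * E.piecewise s w₀ x ∂μ - ∫ x, h x * E.piecewise (0 : α → ℝ) w₀ x ∂μ =
      ∫ x in E, |h x| ∂μ := by
    rw [← integral_sub (hprod hs hsb) (hprod measurable_zero (by simp)), ← integral_indicator hE]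
    refine integral_congr_ae ?_
    filter_upwards [hhs] with x hx
    by_cases hxE : x ∈ E <;> simp [hxE, hx]
  rw [eLpNorm_indicator_eq_eLpNorm_restrict hE, eLpNorm_one_eq_ofReal_integral_abs hh.restrict]
  refine ENNReal.ofReal_le_ofReal ?_
  linarith [abs_le.1 (hpiece s hs hsb), abs_le.1 (hpiece 0 measurable_zero (by simp))]

lemma eLpNorm_le_of_forall_abs_integral_mul_le {h w₀ : α → ℝ} {r ε : ℝ}
    (hh : Integrable h μ) (hw₀ : Measurable w₀) (hw₀b : ∀ x, |w₀ x| ≤ 1)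
    (hball : ∀ w : α → ℝ, Measurable w → (∀ x, |w x| ≤ 1) → ∫ x, |w x - w₀ x| ∂μ ≤ r →
      |∫ x, h x * w x ∂μ| ≤ ε)
    {t : ℝ} (ht₀ : 0 < t) (ht₁ : t ≤ 1) (htr : 2 * t * μ.real Set.univ ≤ r) :
    eLpNorm h 1 μ ≤ ENNReal.ofReal (2 * ε / t) := by
  obtain ⟨s, hs, hsb, hhs⟩ := exists_measurable_abs_le_one_mul_ae_eq_abs hh.aemeasurable
  set w : α → ℝ := fun x => (1 - t) * w₀ x + t * s x
  have hw : Measurable w := (hw₀.const_mul _).add (hs.const_mul _)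
  have hwb (x : α) : |w x| ≤ 1 := by
    calc |w x| ≤ (1 - t) * |w₀ x| + t * |s x| := by
          refine (abs_add_le _ _).trans_eq ?_
          rw [abs_mul, abs_mul, abs_of_nonneg (sub_nonneg.2 ht₁), abs_of_pos ht₀]
      _ ≤ (1 - t) * 1 + t * 1 := by gcongr <;> [exact hw₀b x; exact hsb x]
      _ = 1 := by ring
  have hwr : ∫ x, |w x - w₀ x| ∂μ ≤ r := by
    calc ∫ x, |w x - w₀ x| ∂μ ≤ ∫ _, 2 * t ∂μ := by
          refine integral_mono_of_nonneg (ae_of_all _ fun x => abs_nonneg _)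
            (integrable_const _) (ae_of_all _ fun x => ?_)
          have : w x - w₀ x = t * (s x - w₀ x) := by ring
          change |w x - w₀ x| ≤ 2 * t
          rw [this, abs_mul, abs_of_pos ht₀, mul_comm 2 t]
          exact mul_le_mul_of_nonneg_left
            ((abs_sub _ _).trans (by linarith [hsb x, hw₀b x])) ht₀.le
      _ = 2 * t * μ.real Set.univ := by rw [integral_const, smul_eq_mul, mul_comm]
      _ ≤ r := htr
  have hlin : ∫ x, h x * w x ∂μ = (1 - t) * ∫ x, h x * w₀ x ∂μ + t * ∫ x, |h x| ∂μ := by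
    rw [← integral_const_mul, ← integral_const_mul, ← integral_add
      ((hh.mul_bdd hw₀.aestronglyMeasurable (ae_of_all _ hw₀b)).const_mul _) (hh.abs.const_mul _)]
    refine integral_congr_ae ?_
    filter_upwards [hhs] with x hx
    rw [← hx]
    ring
  have h₁ := abs_le.1 (hball w hw hwb hwr)
  have hr : 0 ≤ r := (by positivity : 0 ≤ 2 * t * μ.real Set.univ).trans htr
  have h₀ := abs_le.1 (hball w₀ hw₀ hw₀b (by simpa using hr))
  rw [eLpNorm_one_eq_ofReal_integral_abs hh]
  refine ENNReal.ofReal_le_ofReal ((le_div_iff₀ ht₀).2 ?_)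
  nlinarith

theorem uniformIntegrable_of_cauchySeq_integral_mul {g : ℕ → α → ℝ}
    (hg : ∀ n, Integrable (g n) μ)
    (hcauchy : ∀ v : α → ℝ, Measurable v → (∀ x, |v x| ≤ 1) →
      CauchySeq fun n => ∫ x, g n x * v x ∂μ) :
    UniformIntegrable g 1 μ := by
  have hg' (n : ℕ) : MemLp (g n) 1 μ := memLp_one_iff_integrable.2 (hg n)
  refine ⟨fun n => (hg n).aestronglyMeasurable,
    unifIntegrable_of_forall_exists_eLpNorm_indicator_sub_le le_rfl ENNReal.one_ne_top hg'
      fun ε hε => ?_, ?_⟩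
  · obtain ⟨m, w₀, hw₀, hw₀b, r, hr, hball⟩ :=
      exists_forall_abs_integral_sub_mul_le hg hcauchy (half_pos hε)
    refine ⟨m, r / 2, half_pos hr, fun n hn E hE hEr => ?_⟩
    have hEr' : 2 * μ.real E ≤ r := by
      have := ENNReal.toReal_le_of_le_ofReal (half_pos hr).le hEr
      rw [measureReal_def]
      linarith
    simpa only [mul_div_cancel₀ ε two_ne_zero] using
      eLpNorm_indicator_le_of_forall_abs_integral_mul_le ((hg n).sub (hg m)) hw₀ hw₀b
        (hball n hn) hE hEr'
  · obtain ⟨m, w₀, hw₀, hw₀b, r, hr, hball⟩ :=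
      exists_forall_abs_integral_sub_mul_le hg hcauchy one_pos
    set T := μ.real Set.univ
    have hT : 0 ≤ T := measureReal_nonneg
    set t := r / (2 * T + r)
    have ht₀ : 0 < t := by positivity
    have ht₁ : t ≤ 1 := (div_le_one (by positivity)).2 (by linarith)
    have htr : 2 * t * T ≤ r := by
      rw [mul_comm 2 t, mul_assoc, div_mul_eq_mul_div, div_le_iff₀ (by positivity)]
      nlinarith
    exact exists_eLpNorm_le_of_forall_ge_eLpNorm_sub_le le_rfl hg' fun n hn =>
      eLpNorm_le_of_forall_abs_integral_mul_le ((hg n).sub (hg m)) hw₀ hw₀b (hball n hn)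
        ht₀ ht₁ htr

theorem tendsto_integral_mul_of_uniformIntegrable {g h : ℕ → α → ℝ} {K : ℝ}
    (hg : UniformIntegrable g 1 μ) (hh : ∀ n, AEStronglyMeasurable (h n) μ)
    (hK : ∀ n, ∀ᵐ x ∂μ, |h n x| ≤ K)
    (hlim : ∀ᵐ x ∂μ, Tendsto (fun n => h n x) atTop (𝓝 0)) :
    Tendsto (fun n => ∫ x, g n x * h n x ∂μ) atTop (𝓝 0) := by
  have hgi (n : ℕ) : Integrable (g n) μ := memLp_one_iff_integrable.1 (hg.memLp n)
  obtain ⟨-, hui, C, hC⟩ := hg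
  set K' := max K 0
  have hK' : 0 ≤ K' := le_max_right _ _
  rw [Metric.tendsto_atTop]
  intro ε hε
  obtain ⟨δ, hδ, hδui⟩ := hui (show 0 < ε / (2 * (K' + 1)) by positivity)
  set η := ε / (2 * (C + 1))
  have hη : 0 < η := by positivity
  obtain ⟨N, hN⟩ := eventually_atTop.1 <|
    (tendstoInMeasure_iff_norm.1 (tendstoInMeasure_of_tendsto_ae hh hlim) η hη).eventually
      (gt_mem_nhds (ENNReal.ofReal_pos.2 hδ))
  refine ⟨N, fun n hn => ?_⟩
  set T := toMeasurable μ {x | η ≤ ‖h n x - 0‖}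
  have hT : MeasurableSet T := measurableSet_toMeasurable _ _
  have hgT : ∫ x in T, |g n x| ∂μ ≤ ε / (2 * (K' + 1)) := by
    have := hδui n T hT (by rw [measure_toMeasurable]; exact (hN n hn).le)
    rw [eLpNorm_indicator_eq_eLpNorm_restrict hT,
      eLpNorm_one_eq_ofReal_integral_abs (hgi n).restrict] at this
    exact (ENNReal.ofReal_le_ofReal_iff (by positivity)).1 this
  have hgC : ∫ x, |g n x| ∂μ ≤ C := by
    have := hC n
    rw [eLpNorm_one_eq_ofReal_integral_abs (hgi n)] at this
    exact (ENNReal.ofReal_le_ofReal_iff C.2).1 (by simpa using this)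
  have hTη (x : α) (hx : x ∉ T) : |h n x| < η := by
    simpa using fun h' => hx (subset_toMeasurable _ _ h')
  rw [Real.dist_eq, sub_zero]
  calc |∫ x, g n x * h n x ∂μ|
      ≤ K' * ∫ x in T, |g n x| ∂μ + η * ∫ x, |g n x| ∂μ :=
        abs_integral_mul_le (hgi n) hT hη.le ((hK n).mono fun x hx => hx.trans (le_max_left _ _))
          hTη
    _ ≤ K' * (ε / (2 * (K' + 1))) + η * C := by gcongr
    _ < ε := by
        have h₁ : K' * (ε / (2 * (K' + 1))) ≤ ε / 2 := by
          rw [mul_div_assoc', div_le_div_iff₀ (by positivity) two_pos]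
          nlinarith
        have h₂ : η * C < ε / 2 := by
          rw [div_mul_eq_mul_div, div_lt_div_iff₀ (by positivity) two_pos]
          nlinarith [C.2]
        linarith

theorem tendsto_integral_mul_mul_of_tendsto_ae {f g : ℕ → α → ℝ} {flim glim φ : α → ℝ}
    {C Cφ : ℝ} (hf : ∀ n, Measurable (f n)) (hflim : Measurable flim)
    (hg : ∀ n, Integrable (g n) μ) (hfC : ∀ n, ∀ᵐ x ∂μ, |f n x| ≤ C)
    (hf_ae : ∀ᵐ x ∂μ, Tendsto (fun n => f n x) atTop (𝓝 (flim x)))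
    (hg_weak : ∀ ψ : α → ℝ, Measurable ψ → (∃ c, ∀ x, |ψ x| ≤ c) →
      Tendsto (fun n => ∫ x, g n x * ψ x ∂μ) atTop (𝓝 (∫ x, glim x * ψ x ∂μ)))
    (hφ : Measurable φ) (hφC : ∀ x, |φ x| ≤ Cφ) :
    Tendsto (fun n => ∫ x, f n x * g n x * φ x ∂μ) atTop
      (𝓝 (∫ x, flim x * glim x * φ x ∂μ)) := by
  -- `flim` is bounded only a.e.; its bounded version `w` makes `w φ` an admissible test function.
  obtain ⟨w, hw, hwC, hflim_w⟩ := exists_measurable_abs_le_ae_eq hflim.aemeasurable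
    (abs_nonneg C) <| by
      filter_upwards [ae_all_iff.2 hfC, hf_ae] with x hx hxlim
      exact (le_of_tendsto' hxlim.abs hx).trans (le_abs_self C)
  set h : ℕ → α → ℝ := fun n x => (f n x - w x) * φ x
  have hh (n : ℕ) : AEStronglyMeasurable (h n) μ :=
    (((hf n).sub hw).mul hφ).aestronglyMeasurable
  have hhC (n : ℕ) : ∀ᵐ x ∂μ, |h n x| ≤ (|C| + |C|) * Cφ := by
    filter_upwards [hfC n] with x hx
    rw [abs_mul]
    exact mul_le_mul ((abs_sub _ _).trans (add_le_add (hx.trans (le_abs_self C)) (hwC x)))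
      (hφC x) (abs_nonneg _) (by positivity)
  have hwφC (x : α) : |w x * φ x| ≤ |C| * Cφ := by
    rw [abs_mul]
    exact mul_le_mul (hwC x) (hφC x) (abs_nonneg _) (abs_nonneg _)
  have hsmall := tendsto_integral_mul_of_uniformIntegrable
    (uniformIntegrable_of_cauchySeq_integral_mul hg fun v hv hvb =>
      (hg_weak v hv ⟨1, hvb⟩).cauchySeq) hh hhC <| by
    filter_upwards [hf_ae, hflim_w] with x hx hxw
    simpa [h, hxw] using (hx.sub_const (w x)).mul_const (φ x)
  convert hsmall.add (hg_weak (fun x => w x * φ x) (hw.mul hφ) ⟨_, hwφC⟩) using 1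
  · funext n
    rw [← integral_add ((hg n).mul_bdd (hh n) (hhC n))
      ((hg n).mul_bdd (g := fun x => w x * φ x) (hw.mul hφ).aestronglyMeasurable
        (ae_of_all _ hwφC))]
    congr 1
    funext x
    ring
  · rw [zero_add]
    congr 1
    refine integral_congr_ae ?_
    filter_upwards [hflim_w] with x hx
    rw [hx]
    ring

end

theorem stmt_4_general (M : ℕ) (O : Set (Fin M → ℝ))
    (hO_bdd : Bornology.IsBounded O)
    (f : ℕ → (Fin M → ℝ) → ℝ) (flim : (Fin M → ℝ) → ℝ)
    (g : ℕ → (Fin M → ℝ) → ℝ) (glim : (Fin M → ℝ) → ℝ)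
    (hf_meas : ∀ n, Measurable (f n)) (hflim_meas : Measurable flim)
    (hg_int : ∀ n, IntegrableOn (g n) O)
    (C : ℝ) (hf_bdd : ∀ n, ∀ᵐ x ∂(volume.restrict O), |f n x| ≤ C)
    (hf_ae : ∀ᵐ x ∂(volume.restrict O), Tendsto (fun n => f n x) atTop (𝓝 (flim x)))
    (hg_weak : ∀ φ : (Fin M → ℝ) → ℝ, Measurable φ → (∃ Cφ, ∀ x, |φ x| ≤ Cφ) →
      Tendsto (fun n => ∫ x in O, g n x * φ x) atTop (𝓝 (∫ x in O, glim x * φ x))) :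
    ∀ φ : (Fin M → ℝ) → ℝ, Measurable φ → (∃ Cφ, ∀ x, |φ x| ≤ Cφ) →
      Tendsto (fun n => ∫ x in O, f n x * g n x * φ x) atTop
        (𝓝 (∫ x in O, flim x * glim x * φ x)) := by
  rintro φ hφ ⟨Cφ, hφC⟩
  have : IsFiniteMeasure (volume.restrict O) :=
    isFiniteMeasure_restrict.2 hO_bdd.measure_lt_top.ne
  exact tendsto_integral_mul_mul_of_tendsto_ae hf_meas hflim_meas hg_int hf_bdd hf_ae hg_weak
    hφ hφC

theorem stmt_4 (M : ℕ) (O : Set (Fin M → ℝ))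
    (hO_bdd : Bornology.IsBounded O) (hO_meas : MeasurableSet O)
    (f : ℕ → (Fin M → ℝ) → ℝ) (flim : (Fin M → ℝ) → ℝ)
    (g : ℕ → (Fin M → ℝ) → ℝ) (glim : (Fin M → ℝ) → ℝ)
    (hf_meas : ∀ n, Measurable (f n)) (hflim_meas : Measurable flim)
    (hg_int : ∀ n, IntegrableOn (g n) O) (hglim_int : IntegrableOn glim O)
    (C : ℝ) (hf_bdd : ∀ n, ∀ᵐ x ∂(volume.restrict O), |f n x| ≤ C)
    (hf_ae : ∀ᵐ x ∂(volume.restrict O), Tendsto (fun n => f n x) atTop (𝓝 (flim x)))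
    (hg_weak : ∀ φ : (Fin M → ℝ) → ℝ, Measurable φ → (∃ Cφ, ∀ x, |φ x| ≤ Cφ) →
      Tendsto (fun n => ∫ x in O, g n x * φ x) atTop (𝓝 (∫ x in O, glim x * φ x))) :
    ∀ φ : (Fin M → ℝ) → ℝ, Measurable φ → (∃ Cφ, ∀ x, |φ x| ≤ Cφ) →
      Tendsto (fun n => ∫ x in O, f n x * g n x * φ x) atTop
        (𝓝 (∫ x in O, flim x * glim x * φ x)) :=
  stmt_4_general M O hO_bdd f flim g glim hf_meas hflim_meas hg_int C hf_bdd hf_ae hg_weak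
end

section
/- Let θ : (0,L) → ℝ be a piecewise constant function on a uniform mesh of N elements of size h = L/N, with values θᵢ on element Eᵢ. Then for any two elements Eᵢ, Eⱼ and points x ∈ Eᵢ, y ∈ Eⱼ, one has |θ(x) − θ(y)|² ≤ (|x − y| + h) · Σ_{k=1}^{N−1} (⟦θ⟧_k)² / h, where ⟦θ⟧_k = θ_{k+1} − θ_k denotes the jump at the k-th interior node. -/
open Finset

lemma aux_tele (θ : ℕ → ℝ) {i j : ℕ} (hij : i ≤ j) :
    θ j - θ i = ∑ k ∈ Finset.Ico i j, (θ (k + 1) - θ k) := by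
  rw [Finset.sum_Ico_eq_sub _ hij, Finset.sum_range_sub, Finset.sum_range_sub]
  ring

lemma aux_key (θ : ℕ → ℝ) (N : ℕ) {i j : ℕ} (hi : 1 ≤ i) (hij : i ≤ j) (hjN : j ≤ N) :
    (θ j - θ i) ^ 2 ≤ ((j : ℝ) - i) * ∑ k ∈ Finset.Icc 1 (N - 1), (θ (k + 1) - θ k) ^ 2 := by
  rw [aux_tele θ hij]
  calc (∑ k ∈ Finset.Ico i j, (θ (k + 1) - θ k)) ^ 2
      ≤ (Finset.Ico i j).card * ∑ k ∈ Finset.Ico i j, (θ (k + 1) - θ k) ^ 2 :=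
        sq_sum_le_card_mul_sum_sq
    _ ≤ ((j : ℝ) - i) * ∑ k ∈ Finset.Icc 1 (N - 1), (θ (k + 1) - θ k) ^ 2 := by
        apply mul_le_mul
        · rw [Nat.card_Ico]
          rw [Nat.cast_sub hij]
        · apply Finset.sum_le_sum_of_subset_of_nonneg
          · intro k hk
            simp only [Finset.mem_Ico, Finset.mem_Icc] at *
            exact ⟨le_trans hi hk.1, by omega⟩
          · intro k _ _; positivity
        · positivity
        · have : (i : ℝ) ≤ j := by exact_mod_cast hij
          linarith

/-- Discrete translation estimate for a piecewise constant function on a uniform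
mesh: `|θ(x) − θ(y)|² ≤ (|x − y| + h) Σₖ ⟦θ⟧ₖ²/h`. Element `Eᵢ = [(i−1)h, ih]`
carries the value `θ i`. -/
theorem stmt_6 (L : ℝ) (N : ℕ) (hN : 0 < N) (hL : 0 < L) (h : ℝ) (hh : h = L / N)
    (θ : ℕ → ℝ) :
    ∀ i ∈ Finset.Icc 1 N, ∀ j ∈ Finset.Icc 1 N,
      ∀ x ∈ Set.Icc ((i - 1 : ℝ) * h) (i * h),
      ∀ y ∈ Set.Icc ((j - 1 : ℝ) * h) (j * h),
        (θ i - θ j) ^ 2 ≤ (|x - y| + h) * ∑ k ∈ Finset.Icc 1 (N - 1), (θ (k + 1) - θ k) ^ 2 / h := by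
  intro i hi j hj x hx y hy
  simp only [Finset.mem_Icc] at hi hj
  have hhpos : 0 < h := by rw [hh]; positivity
  set S : ℝ := ∑ k ∈ Finset.Icc 1 (N - 1), (θ (k + 1) - θ k) ^ 2 with hS
  have hSnn : 0 ≤ S := Finset.sum_nonneg fun k _ => by positivity
  have hrhs : ∑ k ∈ Finset.Icc 1 (N - 1), (θ (k + 1) - θ k) ^ 2 / h = S / h := by
    rw [hS, Finset.sum_div]
  rw [hrhs]
  -- reduce to the symmetric statement
  have main : ∀ a b : ℕ, 1 ≤ a → a ≤ b → b ≤ N →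
      ∀ u ∈ Set.Icc ((a - 1 : ℝ) * h) (a * h), ∀ v ∈ Set.Icc ((b - 1 : ℝ) * h) (b * h),
      (θ b - θ a) ^ 2 ≤ (|u - v| + h) * (S / h) := by
    intro a b ha hab hbN u hu v hv
    have key := aux_key θ N ha hab hbN
    have hdist : ((b : ℝ) - a) * h ≤ |u - v| + h := by
      have h1 : v - u ≥ ((b : ℝ) - 1 - a) * h := by
        have := hu.2
        have := hv.1
        nlinarith
      have h2 : v - u ≤ |u - v| := by
        rw [abs_sub_comm]
        exact le_abs_self _
      nlinarith
    calc (θ b - θ a) ^ 2 ≤ ((b : ℝ) - a) * S := key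
      _ = (((b : ℝ) - a) * h) * (S / h) := by field_simp
      _ ≤ (|u - v| + h) * (S / h) := by
          apply mul_le_mul_of_nonneg_right hdist (by positivity)
  rcases le_total i j with hij | hij
  · have := main i j hi.1 hij hj.2 x hx y hy
    calc (θ i - θ j) ^ 2 = (θ j - θ i) ^ 2 := by ring
      _ ≤ (|x - y| + h) * (S / h) := this
  · have := main j i hj.1 hij hi.2 y hy x hx
    calc (θ i - θ j) ^ 2 ≤ (|y - x| + h) * (S / h) := this
      _ = (|x - y| + h) * (S / h) := by rw [abs_sub_comm]
end
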